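/- arXiv:2504.05943 — 2 statements merged into one kernel-verified Lean document; each statement's English description precedes it below -/
import Mathlib

section
/- Let n, m be nonnegative integers and k ≥ 0. If d^k(n) = d^k(m), then n = m; that is, the function d^k is injective on nonnegative integers. -/
/-- Fold a function `g` over the terms `(a_t, t)` of the unique Macaulay-type
representation `n = C(a_{k+1}, k+1) + ⋯ + C(a_i, i)` with
`a_{k+1} > ⋯ > a_i ≥ i ≥ 1`, computed greedily: at each level `t` (from `k+1`
down), `a_t` is the largest `a` with `C(a, t) ≤` the current remainder. -/
def macRepFold (g : ℕ → ℕ → ℕ) : ℕ → ℕ → ℕ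
  | 0, _ => 0
  | t + 1, n =>
    if n = 0 then 0
    else
      let a := Nat.findGreatest (fun a => Nat.choose a (t + 1) ≤ n) (n + t + 1)
      g a (t + 1) + macRepFold g t (n - Nat.choose a (t + 1))

/-- The combinatorial shadow function `∂_k(n) = Σ_t C(a_t, t - 1)`. -/
def partialLower (k n : ℕ) : ℕ := macRepFold (fun a t => Nat.choose a (t - 1)) (k + 1) n

/-- The combinatorial shadow function `∂^k(n) = Σ_t C(a_t - 1, t)`. -/
def partialUpper (k n : ℕ) : ℕ := macRepFold (fun a t => Nat.choose (a - 1) t) (k + 1) n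

/-- The error function `δ_k(n) = #{t : a_t = t}`. -/
def deltaErr (k n : ℕ) : ℕ := macRepFold (fun a t => if a = t then 1 else 0) (k + 1) n

/-- The function `d^k(n) = Σ_t C(a_t + 1, t)`. -/
def dUpper (k n : ℕ) : ℕ := macRepFold (fun a t => Nat.choose (a + 1) t) (k + 1) n

lemma choose_lb (k m : ℕ) (hsm : k + 1 ≤ m) : m - k ≤ Nat.choose m (k + 1) := by
  induction m, hsm using Nat.le_induction with
  | base => simp
  | succ m hm ih =>
    rw [Nat.choose_succ_succ]
    have h1 : 1 ≤ Nat.choose m k := Nat.choose_pos (Nat.le_of_succ_le hm)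
    simp only [Nat.succ_eq_add_one] at *
    omega

lemma greedy_spec (t n : ℕ) (hn : n ≠ 0) :
    t + 1 ≤ Nat.findGreatest (fun a => Nat.choose a (t + 1) ≤ n) (n + t + 1) ∧
    Nat.choose (Nat.findGreatest (fun a => Nat.choose a (t + 1) ≤ n) (n + t + 1)) (t + 1) ≤ n ∧
    n < Nat.choose (Nat.findGreatest (fun a => Nat.choose a (t + 1) ≤ n) (n + t + 1) + 1) (t + 1) := by
  have hPt : Nat.choose (t + 1) (t + 1) ≤ n := by simp; omega
  have h1 : t + 1 ≤ Nat.findGreatest (fun a => Nat.choose a (t + 1) ≤ n) (n + t + 1) :=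
    Nat.le_findGreatest (by omega) hPt
  have h2 : Nat.choose (Nat.findGreatest (fun a => Nat.choose a (t + 1) ≤ n) (n + t + 1)) (t + 1) ≤ n :=
    Nat.findGreatest_spec (P := fun a => Nat.choose a (t + 1) ≤ n) (n := n + t + 1) (m := t + 1) (by omega) hPt
  refine ⟨h1, h2, ?_⟩
  set a := Nat.findGreatest (fun a => Nat.choose a (t + 1) ≤ n) (n + t + 1) with ha
  rcases le_or_gt (a + 1) (n + t + 1) with hle | hgt
  · have := Nat.findGreatest_is_greatest (n := n + t + 1)
      (P := fun a => Nat.choose a (t + 1) ≤ n) (k := a + 1) (by omega) hle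
    simp only [not_le] at this
    omega
  · have hab : a ≤ n + t + 1 := Nat.findGreatest_le _
    have haeq : a = n + t + 1 := by omega
    have := choose_lb t (a + 1) (by omega)
    omega

lemma macRepFold_succ (g : ℕ → ℕ → ℕ) (t n : ℕ) (hn : n ≠ 0) :
    macRepFold g (t + 1) n =
      g (Nat.findGreatest (fun a => Nat.choose a (t + 1) ≤ n) (n + t + 1)) (t + 1) +
      macRepFold g t (n - Nat.choose
        (Nat.findGreatest (fun a => Nat.choose a (t + 1) ≤ n) (n + t + 1)) (t + 1)) := by
  rw [macRepFold, if_neg hn]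

lemma D_lt : ∀ t n b, n < Nat.choose b t →
    macRepFold (fun a t => Nat.choose (a + 1) t) t n < Nat.choose (b + 1) t := by
  intro t
  induction t with
  | zero => intro n b h; simp [macRepFold]
  | succ t ih =>
    intro n b h
    by_cases hn : n = 0
    · subst hn
      have hb : t + 1 ≤ b := by
        by_contra hc
        rw [Nat.choose_eq_zero_of_lt (by omega)] at h
        omega
      simp only [macRepFold, if_pos rfl]
      exact Nat.choose_pos (by omega)
    · rw [macRepFold_succ _ _ _ hn]
      obtain ⟨h1, h2, h3⟩ := greedy_spec t n hn
      set a := Nat.findGreatest (fun a => Nat.choose a (t + 1) ≤ n) (n + t + 1) with ha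
      have hab : a < b := by
        by_contra hc
        have := Nat.choose_le_choose (t + 1) (show b ≤ a by omega)
        omega
      have hps : Nat.choose (a + 1) (t + 1) = Nat.choose a t + Nat.choose a (t + 1) :=
        Nat.choose_succ_succ a t
      have hr : n - Nat.choose a (t + 1) < Nat.choose a t := by omega
      have hih := ih (n - Nat.choose a (t + 1)) a hr
      have hps2 : Nat.choose (a + 2) (t + 1) = Nat.choose (a + 1) t + Nat.choose (a + 1) (t + 1) :=
        Nat.choose_succ_succ (a + 1) t
      have hmono := Nat.choose_le_choose (t + 1) (show a + 2 ≤ b + 1 by omega)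
      omega

lemma PD : ∀ t n b, n < Nat.choose b t →
    macRepFold (fun a t => Nat.choose (a - 1) t) t
      (macRepFold (fun a t => Nat.choose (a + 1) t) t n) = n := by
  intro t
  induction t with
  | zero => intro n b h; simp only [macRepFold, Nat.choose_zero_right] at *; omega
  | succ t ih =>
    intro n b h
    by_cases hn : n = 0
    · subst hn; simp [macRepFold]
    · rw [macRepFold_succ _ _ _ hn]
      obtain ⟨h1, h2, h3⟩ := greedy_spec t n hn
      set a := Nat.findGreatest (fun a => Nat.choose a (t + 1) ≤ n) (n + t + 1) with ha
      set r := n - Nat.choose a (t + 1) with hrdef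
      have hps : Nat.choose (a + 1) (t + 1) = Nat.choose a t + Nat.choose a (t + 1) :=
        Nat.choose_succ_succ a t
      have hr : r < Nat.choose a t := by omega
      set D := macRepFold (fun a t => Nat.choose (a + 1) t) t r with hD
      have hDlt : D < Nat.choose (a + 1) t := D_lt t r a hr
      set m := Nat.choose (a + 1) (t + 1) + D with hm
      have hcpos : 0 < Nat.choose (a + 1) (t + 1) := Nat.choose_pos (by omega)
      have hm0 : m ≠ 0 := by omega
      have hps2 : Nat.choose (a + 2) (t + 1) = Nat.choose (a + 1) t + Nat.choose (a + 1) (t + 1) :=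
        Nat.choose_succ_succ (a + 1) t
      have hmlt : m < Nat.choose (a + 2) (t + 1) := by omega
      have hlb := choose_lb t (a + 1) (by omega)
      -- the greedy choice for m is a + 1
      have ha' : Nat.findGreatest (fun x => Nat.choose x (t + 1) ≤ m) (m + t + 1) = a + 1 := by
        have hble : a + 1 ≤ m + t + 1 := by omega
        have hge : a + 1 ≤ Nat.findGreatest (fun x => Nat.choose x (t + 1) ≤ m) (m + t + 1) :=
          Nat.le_findGreatest hble (by omega)
        have hle : Nat.findGreatest (fun x => Nat.choose x (t + 1) ≤ m) (m + t + 1) ≤ a + 1 := by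
          by_contra hc
          have hsp : Nat.choose (Nat.findGreatest (fun x => Nat.choose x (t + 1) ≤ m) (m + t + 1)) (t + 1) ≤ m :=
            Nat.findGreatest_spec (P := fun x => Nat.choose x (t + 1) ≤ m) (n := m + t + 1) (m := a + 1) hble (by omega)
          have := Nat.choose_le_choose (t + 1)
            (show a + 2 ≤ Nat.findGreatest (fun x => Nat.choose x (t + 1) ≤ m) (m + t + 1) by omega)
          omega
        omega
      rw [macRepFold_succ _ _ _ hm0, ha']
      have hsub : m - Nat.choose (a + 1) (t + 1) = D := by omega
      rw [hsub, Nat.add_sub_cancel]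
      have := ih r a hr
      rw [hD, this]
      omega

/-- Lemma 2.5(c): `d^k` is injective. -/
theorem dUpper_injective (k n m : ℕ) (h : dUpper k n = dUpper k m) :
    n = m := by
  have key : ∀ x : ℕ, partialUpper k (dUpper k x) = x := by
    intro x
    refine PD (k + 1) x (x + k + 2) ?_
    have := choose_lb k (x + k + 2) (by omega)
    omega
  rw [← key n, h, key m]
end

section
/- Let f = (f_0, f_1, …) and β = (β_0, β_1, …) be eventually-zero sequences of nonnegative integers such that χ_k + β_k ≥ 0 and χ_{k−1} ≥ 0 for all k ≥ 1. Then ∂_k(χ_k + β_k) + δ_k(f_k) = χ_{k−1} holds for all k ≥ 1 if and only if f_k − χ_{k−1} = ∂^k(f_k) holds for all k ≥ 1. -/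
lemma succ_le_choose' (m k : ℕ) (hk : 1 ≤ k) : m + 1 ≤ (m + k).choose k := by
  induction k with
  | zero => omega
  | succ k ih =>
    rcases Nat.eq_or_lt_of_le hk with h | h
    · simp [← h]
    · have hk1 : 1 ≤ k := by omega
      have := ih hk1
      have : (m + (k+1)).choose (k+1) = (m+k).choose k + (m+k).choose (k+1) := by
        have : m + (k+1) = (m+k) + 1 := by omega
        rw [this, Nat.choose_succ_succ']
      omega

lemma macRepFold_zero (g : ℕ → ℕ → ℕ) (t : ℕ) : macRepFold g t 0 = 0 := by
  cases t <;> simp [macRepFold]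

/-- Unfolding lemma with a specified `b` satisfying the greedy spec. -/
lemma macRepFold_eq (g : ℕ → ℕ → ℕ) (T n b : ℕ) (hb : T + 1 ≤ b)
    (h1 : b.choose (T + 1) ≤ n) (h2 : n < (b + 1).choose (T + 1)) :
    macRepFold g (T + 1) n = g b (T + 1) + macRepFold g T (n - b.choose (T + 1)) := by
  have hn : n ≠ 0 := by
    have := Nat.choose_pos hb
    omega
  have hble : b ≤ n + T + 1 := by
    have h3 := succ_le_choose' (b - (T+1)) (T+1) (by omega)
    have : b - (T+1) + (T+1) = b := by omega
    rw [this] at h3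
    omega
  have hfg : Nat.findGreatest (fun a => Nat.choose a (T + 1) ≤ n) (n + T + 1) = b := by
    rw [Nat.findGreatest_eq_iff]
    refine ⟨hble, fun _ => h1, fun m hm hm' => ?_⟩
    have : (b+1).choose (T+1) ≤ m.choose (T+1) := Nat.choose_le_choose _ hm
    simp only [not_le]
    omega
  simp only [macRepFold, if_neg hn, hfg]

/-- Existence of the greedy spec. -/
lemma greedy_exists (T n : ℕ) (hn : 1 ≤ n) :
    ∃ b, T + 1 ≤ b ∧ b.choose (T + 1) ≤ n ∧ n < (b + 1).choose (T + 1) := by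
  have hPT : (T + 1).choose (T + 1) ≤ n := by rw [Nat.choose_self]; omega
  set b := Nat.findGreatest (fun a => Nat.choose a (T + 1) ≤ n) (n + T + 1) with hbdef
  have hb1 : T + 1 ≤ b := Nat.le_findGreatest (by omega) hPT
  have hspec : b.choose (T + 1) ≤ n :=
    Nat.findGreatest_spec (P := fun a => Nat.choose a (T + 1) ≤ n) (m := T + 1) (by omega) hPT
  have hble : b ≤ n + T + 1 := Nat.findGreatest_le _
  have hbig : n + 1 ≤ (n + T + 1).choose (T + 1) := by
    have h4 := succ_le_choose' n (T + 1) (by omega)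
    have h5 : n + (T + 1) = n + T + 1 := by omega
    rwa [h5] at h4
  have hblt : b < n + T + 1 := by
    rcases Nat.lt_or_ge b (n + T + 1) with h | h
    · exact h
    · have := Nat.choose_le_choose (T + 1) h
      omega
  have hnot : ¬ ((b + 1).choose (T + 1) ≤ n) :=
    Nat.findGreatest_is_greatest (P := fun a => Nat.choose a (T + 1) ≤ n)
      (n := n + T + 1) (k := b + 1) (by omega) (by omega)
  exact ⟨b, hb1, hspec, by omega⟩

/-- remainder bound -/
lemma greedy_rem (T n b : ℕ) (hb : T ≤ b) (h2 : n < (b + 1).choose (T + 1)) :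
    n - b.choose (T + 1) < b.choose T := by
  have h3 := Nat.choose_succ_succ' b T
  have h4 := Nat.choose_pos hb
  omega

lemma macRepFold_congr (g1 g2 : ℕ → ℕ → ℕ)
    (h : ∀ a t, 1 ≤ t → t ≤ a → g1 a t = g2 a t) :
    ∀ T n, macRepFold g1 T n = macRepFold g2 T n := by
  intro T
  induction T with
  | zero => intro n; rfl
  | succ T ih =>
    intro n
    rcases Nat.eq_zero_or_pos n with rfl | hn
    · simp [macRepFold_zero]
    · obtain ⟨b, hb1, h1, h2⟩ := greedy_exists T n hn
      rw [macRepFold_eq g1 T n b hb1 h1 h2, macRepFold_eq g2 T n b hb1 h1 h2,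
        h b (T+1) (by omega) hb1, ih]

lemma macRepFold_add (g1 g2 : ℕ → ℕ → ℕ) :
    ∀ T n, macRepFold (fun a t => g1 a t + g2 a t) T n
      = macRepFold g1 T n + macRepFold g2 T n := by
  intro T
  induction T with
  | zero => intro n; rfl
  | succ T ih =>
    intro n
    rcases Nat.eq_zero_or_pos n with rfl | hn
    · simp [macRepFold_zero]
    · obtain ⟨b, hb1, h1, h2⟩ := greedy_exists T n hn
      rw [macRepFold_eq _ T n b hb1 h1 h2, macRepFold_eq g1 T n b hb1 h1 h2,
        macRepFold_eq g2 T n b hb1 h1 h2, ih]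
      ring

lemma macRepFold_choose : ∀ T n, macRepFold (fun a t => a.choose t) (T + 1) n = n := by
  intro T
  induction T with
  | zero =>
    intro n
    rcases Nat.eq_zero_or_pos n with rfl | hn
    · simp [macRepFold_zero]
    · have hb1 : 0 + 1 ≤ n := hn
      have h1 : n.choose 1 ≤ n := by simp [Nat.choose_one_right]
      have h2 : n < (n + 1).choose 1 := by simp [Nat.choose_one_right]
      rw [macRepFold_eq _ 0 n n hb1 h1 h2]
      simp [Nat.choose_one_right, macRepFold_zero]
  | succ T ih =>
    intro n
    rcases Nat.eq_zero_or_pos n with rfl | hn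
    · simp [macRepFold_zero]
    · obtain ⟨b, hb1, h1, h2⟩ := greedy_exists (T+1) n hn
      rw [macRepFold_eq _ (T+1) n b hb1 h1 h2, ih]
      omega

lemma macRepFold_up_small : ∀ T r, r ≤ T →
    macRepFold (fun a t => (a - 1).choose t) T r = 0 := by
  intro T
  induction T with
  | zero => intro r _; rfl
  | succ T ih =>
    intro r hr
    rcases Nat.eq_zero_or_pos r with rfl | hr0
    · simp [macRepFold_zero]
    · have h1 : (T + 1).choose (T + 1) ≤ r := by simp [Nat.choose_self]; omega
      have h2 : r < (T + 2).choose (T + 1) := by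
        rw [Nat.choose_succ_succ', Nat.choose_self, Nat.choose_succ_self_right]
        omega
      rw [macRepFold_eq _ T r (T+1) le_rfl h1 h2]
      rw [Nat.choose_self] at *
      have : (T + 1 - 1).choose (T + 1) = 0 := Nat.choose_eq_zero_of_lt (by omega)
      rw [this, ih (r - 1) (by omega)]

/-- Upper bound for the `∂^`-type fold. -/
lemma macRepFold_up_lt : ∀ T b r, T < b → r < b.choose T →
    macRepFold (fun a t => (a - 1).choose t) T r < (b - 1).choose T := by
  intro T
  induction T with
  | zero =>
    intro b r hb hr
    simp only [macRepFold, Nat.choose_zero_right] at *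
    omega
  | succ T ih =>
    intro b r hb hr
    rcases Nat.eq_zero_or_pos r with rfl | hr0
    · simp only [macRepFold_zero]
      exact Nat.choose_pos (by omega)
    · obtain ⟨a, ha1, h1, h2⟩ := greedy_exists T r hr0
      have hab : a < b := by
        by_contra hcon
        have := Nat.choose_le_choose (T + 1) (show b ≤ a by omega)
        omega
      rw [macRepFold_eq _ T r a ha1 h1 h2]
      have hrem := greedy_rem T r a (by omega) h2
      have hih := ih a (r - a.choose (T + 1)) (by omega) hrem
      have hpas : (a - 1).choose (T + 1) + (a - 1).choose T = a.choose (T + 1) := by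
        have hp := Nat.choose_succ_succ' (a - 1) T
        have ha : a - 1 + 1 = a := by omega
        rw [ha] at hp
        omega
      have hmono := Nat.choose_le_choose (T + 1) (show a ≤ b - 1 by omega)
      omega

/-- Upper bound for the `d^`-type fold. -/
lemma macRepFold_du_lt : ∀ T b n, T ≤ b → n < b.choose T →
    macRepFold (fun a t => (a + 1).choose t) T n < (b + 1).choose T := by
  intro T
  induction T with
  | zero =>
    intro b n hb hn
    simp only [macRepFold, Nat.choose_zero_right] at *
    omega
  | succ T ih =>
    intro b n hb hn
    rcases Nat.eq_zero_or_pos n with rfl | hn0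
    · simp only [macRepFold_zero]
      exact Nat.choose_pos (by omega)
    · obtain ⟨a, ha1, h1, h2⟩ := greedy_exists T n hn0
      have hab : a < b := by
        by_contra hcon
        have := Nat.choose_le_choose (T + 1) (show b ≤ a by omega)
        omega
      rw [macRepFold_eq _ T n a ha1 h1 h2]
      have hrem := greedy_rem T n a (by omega) h2
      have hih := ih a (n - a.choose (T + 1)) (by omega) hrem
      have hpas : (a + 2).choose (T + 1) = (a + 1).choose T + (a + 1).choose (T + 1) :=
        Nat.choose_succ_succ' (a + 1) T
      have hmono := Nat.choose_le_choose (T + 1) (show a + 2 ≤ b + 1 by omega)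
      omega

/-- Strict monotonicity of the `d^`-type fold. -/
lemma macRepFold_du_strictMono : ∀ T m n, m < n →
    macRepFold (fun a t => (a + 1).choose t) (T + 1) m
      < macRepFold (fun a t => (a + 1).choose t) (T + 1) n := by
  intro T
  induction T with
  | zero =>
    intro m n hmn
    have comp : ∀ k, 1 ≤ k → macRepFold (fun a t => (a + 1).choose t) 1 k = k + 1 := by
      intro k hk
      have h1 : k.choose 1 ≤ k := by simp [Nat.choose_one_right]
      have h2 : k < (k + 1).choose 1 := by simp [Nat.choose_one_right]
      rw [macRepFold_eq _ 0 k k hk h1 h2]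
      simp [Nat.choose_one_right, macRepFold_zero]
    rcases Nat.eq_zero_or_pos m with rfl | hm0
    · rw [macRepFold_zero, comp n (by omega)]; omega
    · rw [comp m (by omega), comp n (by omega)]; omega
  | succ T ih =>
    intro m n hmn
    have hn0 : 1 ≤ n := by omega
    obtain ⟨a, ha1, h1, h2⟩ := greedy_exists (T + 1) n hn0
    have e1 : a.choose (T + 2) = a.choose (T + 1 + 1) := rfl
    have e2 : (a + 1).choose (T + 2) = (a + 1).choose (T + 1 + 1) := rfl
    rw [macRepFold_eq _ (T+1) n a ha1 h1 h2]
    rcases Nat.lt_or_ge m (a.choose (T + 2)) with hcase | hcase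
    · have := macRepFold_du_lt (T + 2) a m ha1 hcase
      have e3 : macRepFold (fun a t => (a + 1).choose t) (T + 2) m
          = macRepFold (fun a t => (a + 1).choose t) (T + 1 + 1) m := rfl
      omega
    · rw [macRepFold_eq _ (T+1) m a ha1 (by omega) (by omega)]
      have := ih (m - a.choose (T + 2)) (n - a.choose (T + 2)) (by omega)
      have e4 : macRepFold (fun a t => (a + 1).choose t) (T + 1) (m - a.choose (T + 2))
          = macRepFold (fun a t => (a + 1).choose t) (T + 1) (m - a.choose (T + 1 + 1)) := rfl
      have e5 : macRepFold (fun a t => (a + 1).choose t) (T + 1) (n - a.choose (T + 2))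
          = macRepFold (fun a t => (a + 1).choose t) (T + 1) (n - a.choose (T + 1 + 1)) := rfl
      omega

lemma macRepFold_level0 (g : ℕ → ℕ → ℕ) (n : ℕ) : macRepFold g 0 n = 0 := rfl

/-- Main identity: `∂(∂^(n)) + δ(n) + ∂^(n) = n`. -/
lemma macRepFold_main : ∀ T n,
    macRepFold (fun a t => a.choose (t - 1)) (T + 1)
        (macRepFold (fun a t => (a - 1).choose t) (T + 1) n)
      + macRepFold (fun a t => if a = t then 1 else 0) (T + 1) n
      + macRepFold (fun a t => (a - 1).choose t) (T + 1) n = n := by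
  intro T
  induction T with
  | zero =>
    intro n
    rcases Nat.eq_zero_or_pos n with rfl | hn
    · simp [macRepFold_zero]
    · have h1 : n.choose 1 ≤ n := by simp [Nat.choose_one_right]
      have h2 : n < (n + 1).choose 1 := by simp [Nat.choose_one_right]
      rw [macRepFold_eq (fun a t => (a - 1).choose t) 0 n n hn h1 h2,
        macRepFold_eq (fun a t => if a = t then 1 else 0) 0 n n hn h1 h2]
      simp only [Nat.zero_add, macRepFold_level0, Nat.choose_one_right, Nat.add_zero]
      rcases Nat.eq_or_lt_of_le hn with h | h
      · rw [← h]
        simp [macRepFold_zero]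
      · have hm : 1 ≤ n - 1 := by omega
        have g1 : (n - 1).choose 1 ≤ n - 1 := by simp [Nat.choose_one_right]
        have g2 : n - 1 < (n - 1 + 1).choose 1 := by simp [Nat.choose_one_right]
        rw [macRepFold_eq (fun a t => a.choose (t - 1)) 0 (n - 1) (n - 1) hm g1 g2]
        simp only [Nat.zero_add, macRepFold_level0, Nat.choose_one_right, Nat.add_zero]
        have hne : ¬ (n = 1) := by omega
        rw [if_neg hne]
        have hc0 : (n - 1).choose (1 - 1) = 1 := Nat.choose_zero_right _
        omega
  | succ T ih =>
    intro n
    rcases Nat.eq_zero_or_pos n with rfl | hn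
    · simp [macRepFold_zero]
    · obtain ⟨a, ha1, h1, h2⟩ := greedy_exists (T + 1) n hn
      have hrem : n - a.choose (T + 1 + 1) < a.choose (T + 1) :=
        greedy_rem (T + 1) n a (by omega) h2
      have Hup := macRepFold_eq (fun a t => (a - 1).choose t) (T + 1) n a ha1 h1 h2
      have Hδ := macRepFold_eq (fun a t => if a = t then 1 else 0) (T + 1) n a ha1 h1 h2
      beta_reduce at Hup Hδ
      have ihr := ih (n - a.choose (T + 1 + 1))
      rw [Hup, Hδ]
      rcases Nat.eq_or_lt_of_le ha1 with haT | haT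
      · -- a = T + 2
        subst haT
        have hrsmall : n - (T + 1 + 1).choose (T + 1 + 1) ≤ T + 1 := by
          have hc : (T + 1 + 1).choose (T + 1) = T + 1 + 1 :=
            Nat.choose_succ_self_right (T + 1)
          omega
        have hm0 : macRepFold (fun a t => (a - 1).choose t) (T + 1)
            (n - (T + 1 + 1).choose (T + 1 + 1)) = 0 :=
          macRepFold_up_small (T + 1) _ hrsmall
        have hz : (T + 1 + 1 - 1).choose (T + 1 + 1) = 0 :=
          Nat.choose_eq_zero_of_lt (by omega)
        rw [hm0, hz, Nat.add_zero, macRepFold_zero]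
        rw [hm0, macRepFold_zero] at ihr
        have hchoose1 : (T + 1 + 1).choose (T + 1 + 1) = 1 := Nat.choose_self _
        rw [if_pos rfl]
        omega
      · -- a ≥ T + 3
        have hup : macRepFold (fun a t => (a - 1).choose t) (T + 1)
            (n - a.choose (T + 1 + 1)) < (a - 1).choose (T + 1) :=
          macRepFold_up_lt (T + 1) a _ (by omega) hrem
        have hδ : (if a = T + 1 + 1 then 1 else 0) = 0 := by
          have hne : ¬ (a = T + 1 + 1) := by omega
          simp [hne]
        rw [hδ]
        have hpas : a.choose (T + 1 + 1)
            = (a - 1).choose (T + 1) + (a - 1).choose (T + 1 + 1) := by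
          have hp := Nat.choose_succ_succ' (a - 1) (T + 1)
          have hae : a - 1 + 1 = a := by omega
          rw [hae] at hp
          exact hp
        have hb1 : T + 1 + 1 ≤ a - 1 := by omega
        have g1 : (a - 1).choose (T + 1 + 1) ≤ (a - 1).choose (T + 1 + 1)
            + macRepFold (fun a t => (a - 1).choose t) (T + 1) (n - a.choose (T + 1 + 1)) := by
          omega
        have g2 : (a - 1).choose (T + 1 + 1)
            + macRepFold (fun a t => (a - 1).choose t) (T + 1) (n - a.choose (T + 1 + 1))
            < (a - 1 + 1).choose (T + 1 + 1) := by
          have hae : a - 1 + 1 = a := by omega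
          rw [hae]
          omega
        have Hlow := macRepFold_eq (fun a t => a.choose (t - 1)) (T + 1)
          ((a - 1).choose (T + 1 + 1)
            + macRepFold (fun a t => (a - 1).choose t) (T + 1) (n - a.choose (T + 1 + 1)))
          (a - 1) hb1 g1 g2
        beta_reduce at Hlow
        have hsub : (a - 1).choose (T + 1 + 1)
            + macRepFold (fun a t => (a - 1).choose t) (T + 1) (n - a.choose (T + 1 + 1))
            - (a - 1).choose (T + 1 + 1)
            = macRepFold (fun a t => (a - 1).choose t) (T + 1) (n - a.choose (T + 1 + 1)) := by
          omega
        rw [hsub] at Hlow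
        have hts : T + 1 + 1 - 1 = T + 1 := rfl
        rw [hts] at Hlow
        rw [Hlow]
        omega

lemma macRepFold_u_eq (T m : ℕ) :
    macRepFold (fun a t => (a + 1).choose t) (T + 1) m
      = m + macRepFold (fun a t => a.choose (t - 1)) (T + 1) m := by
  have hcongr : ∀ a t, 1 ≤ t → t ≤ a → (a + 1).choose t = a.choose t + a.choose (t - 1) := by
    intro a t ht hta
    cases t with
    | zero => omega
    | succ s =>
      show (a + 1).choose (s + 1) = a.choose (s + 1) + a.choose (s + 1 - 1)
      simp only [Nat.add_sub_cancel]
      rw [Nat.choose_succ_succ']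
      omega
  rw [macRepFold_congr _ _ hcongr (T + 1) m, macRepFold_add, macRepFold_choose]

lemma shadow_inj (T m m' : ℕ)
    (h : m + macRepFold (fun a t => a.choose (t - 1)) (T + 1) m
       = m' + macRepFold (fun a t => a.choose (t - 1)) (T + 1) m') : m = m' := by
  rcases lt_trichotomy m m' with hlt | he | hlt
  · have := macRepFold_du_strictMono T m m' hlt
    rw [macRepFold_u_eq, macRepFold_u_eq] at this
    omega
  · exact he
  · have := macRepFold_du_strictMono T m' m hlt
    rw [macRepFold_u_eq, macRepFold_u_eq] at this
    omega

/-- Theorem 1.4 (c*), combinatorial core: for eventually-zero sequences `f, β` of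
nonnegative integers with `χ_k + β_k ≥ 0` and `χ_{k−1} ≥ 0` for all `k ≥ 1`:
`∂_k(χ_k + β_k) + δ_k(f_k) = χ_{k−1}` for all `k ≥ 1` iff
`f_k − χ_{k−1} = ∂^k(f_k)` for all `k ≥ 1`.
Here `χ k` denotes `χ_{k−1} = Σ_{j ≥ k} (−1)^{j−k}(f_j − β_j)`,
so `χ_k + β_k = χ (k+1) + β k`. -/
theorem shadow_err_eq_iff_partialUpper_eq (f β : ℕ → ℕ)
    (hf : ∃ N, ∀ j, N ≤ j → f j = 0) (hβ : ∃ N, ∀ j, N ≤ j → β j = 0)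
    (χ : ℕ → ℤ)
    (hχ : ∀ k, χ k = ∑ᶠ j : ℕ,
      if k ≤ j then (-1 : ℤ) ^ (j - k) * ((f j : ℤ) - (β j : ℤ)) else 0)
    (hpos : ∀ k, 1 ≤ k → 0 ≤ χ (k + 1) + (β k : ℤ))
    (hχpos : ∀ k, 1 ≤ k → 0 ≤ χ k) :
    (∀ k, 1 ≤ k →
        (partialLower k (χ (k + 1) + (β k : ℤ)).toNat : ℤ) + (deltaErr k (f k) : ℤ) = χ k) ↔
    (∀ k, 1 ≤ k → (f k : ℤ) - χ k = (partialUpper k (f k) : ℤ)) := by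
  obtain ⟨Nf, hNf⟩ := hf
  obtain ⟨Nb, hNb⟩ := hβ
  -- recursion for χ
  have hrec : ∀ k, χ k = (f k : ℤ) - (β k : ℤ) - χ (k + 1) := by
    intro k
    set N := max Nf Nb + k + 2 with hN
    have hsupp : ∀ l : ℕ,
        (Function.support fun j => if l ≤ j then (-1 : ℤ) ^ (j - l) * ((f j : ℤ) - (β j : ℤ)) else 0)
          ⊆ ↑(Finset.range N) := by
      intro l j hj
      simp only [Function.mem_support] at hj
      simp only [Finset.coe_range, Set.mem_Iio]
      by_contra hc
      push_neg at hc
      have hfj : f j = 0 := hNf j (by omega)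
      have hbj : β j = 0 := hNb j (by omega)
      apply hj
      simp [hfj, hbj]
    have hk := hχ k
    have hk1 := hχ (k + 1)
    rw [finsum_eq_finset_sum_of_support_subset _ (hsupp k)] at hk
    rw [finsum_eq_finset_sum_of_support_subset _ (hsupp (k + 1))] at hk1
    have key : (∑ j ∈ Finset.range N, if k ≤ j then (-1 : ℤ) ^ (j - k) * ((f j : ℤ) - (β j : ℤ)) else 0)
        + (∑ j ∈ Finset.range N, if k + 1 ≤ j then (-1 : ℤ) ^ (j - (k + 1)) * ((f j : ℤ) - (β j : ℤ)) else 0)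
        = (f k : ℤ) - (β k : ℤ) := by
      rw [← Finset.sum_add_distrib]
      have hcong : ∀ j ∈ Finset.range N,
          ((if k ≤ j then (-1 : ℤ) ^ (j - k) * ((f j : ℤ) - (β j : ℤ)) else 0)
            + (if k + 1 ≤ j then (-1 : ℤ) ^ (j - (k + 1)) * ((f j : ℤ) - (β j : ℤ)) else 0))
          = if j = k then ((f k : ℤ) - (β k : ℤ)) else 0 := by
        intro j _
        rcases lt_trichotomy j k with hj | hj | hj
        · rw [if_neg (by omega), if_neg (by omega), if_neg (by omega)]
          ring
        · subst hj
          rw [if_pos le_rfl, if_neg (by omega), if_pos rfl]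
          simp
        · rw [if_pos (by omega), if_pos (by omega), if_neg (by omega)]
          have hpow : j - k = (j - (k + 1)) + 1 := by omega
          rw [hpow, pow_succ]
          ring
      rw [Finset.sum_congr rfl hcong, Finset.sum_ite_eq' (Finset.range N) k]
      rw [if_pos (by simp [hN]; omega)]
    rw [hk, hk1] at *
    linarith [key]
  constructor
  · -- (A) → (B)
    intro h k hk
    have hr := hrec k
    have hp := hpos k hk
    have hcp := hχpos k hk
    have hA := h k hk
    set m : ℕ := (χ (k + 1) + (β k : ℤ)).toNat with hm
    have hmZ : (m : ℤ) = (f k : ℤ) - χ k := by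
      rw [hm, Int.toNat_of_nonneg hp]
      linarith
    set c : ℕ := (χ k).toNat with hc
    have hcZ : (c : ℤ) = χ k := Int.toNat_of_nonneg hcp
    have hmc : m + c = f k := by
      have : (m : ℤ) + (c : ℤ) = (f k : ℤ) := by rw [hmZ, hcZ]; ring
      exact_mod_cast this
    have hAN : partialLower k m + deltaErr k (f k) = c := by
      have : (partialLower k m : ℤ) + (deltaErr k (f k) : ℤ) = (c : ℤ) := by
        rw [hcZ]; exact hA
      exact_mod_cast this
    have main := macRepFold_main k (f k)
    set ms : ℕ := macRepFold (fun a t => (a - 1).choose t) (k + 1) (f k) with hms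
    have hEq : m + macRepFold (fun a t => a.choose (t - 1)) (k + 1) m
        = ms + macRepFold (fun a t => a.choose (t - 1)) (k + 1) ms := by
      have e1 : partialLower k m = macRepFold (fun a t => a.choose (t - 1)) (k + 1) m := rfl
      have e3 : deltaErr k (f k)
          = macRepFold (fun a t => if a = t then 1 else 0) (k + 1) (f k) := rfl
      rw [e1, e3] at hAN
      have e4 : macRepFold (fun a t => (a - 1).choose t) (k + 1) (f k) = ms := hms.symm
      omega
    have hmm : m = ms := shadow_inj k m ms hEq
    show (f k : ℤ) - χ k = (partialUpper k (f k) : ℤ)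
    have e2 : partialUpper k (f k) = ms := rfl
    rw [e2, ← hmm, ← hmZ]
  · -- (B) → (A)
    intro h k hk
    have hr := hrec k
    have hp := hpos k hk
    have hB := h k hk
    set m : ℕ := (χ (k + 1) + (β k : ℤ)).toNat with hm
    have hmZ : (m : ℤ) = (f k : ℤ) - χ k := by
      rw [hm, Int.toNat_of_nonneg hp]
      linarith
    set ms : ℕ := macRepFold (fun a t => (a - 1).choose t) (k + 1) (f k) with hms
    have e2 : (partialUpper k (f k) : ℕ) = ms := rfl
    have hmm : m = ms := by
      have : (m : ℤ) = (ms : ℤ) := by rw [hmZ, hB, e2]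
      exact_mod_cast this
    have main := macRepFold_main k (f k)
    have e1 : partialLower k m = macRepFold (fun a t => a.choose (t - 1)) (k + 1) m := rfl
    have e3 : deltaErr k (f k)
        = macRepFold (fun a t => if a = t then 1 else 0) (k + 1) (f k) := rfl
    rw [e1, e3, hmm]
    have : (macRepFold (fun a t => a.choose (t - 1)) (k + 1) ms : ℤ)
        + (macRepFold (fun a t => if a = t then 1 else 0) (k + 1) (f k) : ℤ)
        = (f k : ℤ) - (ms : ℤ) := by
      have hcast : (macRepFold (fun a t => a.choose (t - 1)) (k + 1) ms
          + macRepFold (fun a t => if a = t then 1 else 0) (k + 1) (f k) + ms : ℤ) = (f k : ℤ) := by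
        exact_mod_cast congrArg (Nat.cast : ℕ → ℤ) main
      linarith
    rw [this, ← hmm, hmZ]
    ring
end
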